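/- arXiv:1309.4605 — 5 statements merged into one kernel-verified Lean document; each statement's English description precedes it below -/
import Mathlib

section
/- Let μ : [0,∞) → [0,∞) be nonincreasing with 0 < ∫₀^∞ μ(s) ds < ∞, and suppose there exist C ≥ 1 and δ > 0 such that μ(σ+s) ≤ C e^{-δσ} μ(s) for all σ ≥ 0 and s > 0. Then for every measurable g : (0,∞) → [0,∞) one has ∫₀^∞ μ(s) (∫₀^s g(σ) dσ) ds ≤ (√(4Cm)/δ) · (∫₀^∞ μ(σ) g(σ)² dσ)^{1/2}, where m = ∫₀^∞ μ(s) ds. -/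
/-!
Write `F s = ∫₀^s g`. Cauchy–Schwarz against the weight `μ` gives `(∫ μ F)² ≤ m ∫ μ F²`. For fixed
`s`, Cauchy–Schwarz on `(0, s)` with the weight `W σ = μ σ e^{-δ(s-σ)/2}`, together with the decay
condition in the form `μ s / W σ ≤ C e^{-δ(s-σ)/2}`, gives
`μ s F(s)² ≤ (2C/δ) ∫₀^s μ σ g(σ)² e^{-δ(s-σ)/2} dσ`. Integrating in `s` and exchanging the order of
integration yields a further factor `2/δ`, so `(∫ μ F)² ≤ (4Cm/δ²) ∫ μ g²`.
-/

open MeasureTheory Set ENNReal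

namespace ENNReal

variable {α : Type*} [MeasurableSpace α] {ρ : Measure α}

theorem rpow_half_sq (x : ℝ≥0∞) : (x ^ ((1:ℝ)/2)) ^ 2 = x := by
  rw [← rpow_natCast, ← rpow_mul]; norm_num

theorem sq_rpow_half (x : ℝ≥0∞) : (x ^ 2) ^ ((1:ℝ)/2) = x := by
  rw [← rpow_natCast, ← rpow_mul]; norm_num

theorem sq_lintegral_mul_le_lintegral_mul_sq {w F : α → ℝ≥0∞} (hw : AEMeasurable w ρ)
    (hF : AEMeasurable F ρ) :
    (∫⁻ a, w a * F a ∂ρ) ^ 2 ≤ (∫⁻ a, w a ∂ρ) * ∫⁻ a, w a * F a ^ 2 ∂ρ := by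
  have hsqrt : AEMeasurable (fun a => w a ^ ((1:ℝ)/2)) ρ := hw.pow_const _
  have holder := lintegral_mul_le_Lp_mul_Lq ρ Real.HolderConjugate.two_two hsqrt (hsqrt.mul hF)
  have hsplit : ∀ a, w a * F a = w a ^ ((1:ℝ)/2) * (w a ^ ((1:ℝ)/2) * F a) := fun a => by
    rw [← mul_assoc, ← sq, rpow_half_sq]
  simp only [Pi.mul_apply, ← hsplit, mul_rpow_of_nonneg _ _ zero_le_two, rpow_two,
    rpow_half_sq] at holder
  calc (∫⁻ a, w a * F a ∂ρ) ^ 2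
      ≤ ((∫⁻ a, w a ∂ρ) ^ ((1:ℝ)/2) * (∫⁻ a, w a * F a ^ 2 ∂ρ) ^ ((1:ℝ)/2)) ^ 2 := by
        gcongr
    _ = _ := by rw [mul_pow, rpow_half_sq, rpow_half_sq]

theorem sq_lintegral_le_lintegral_mul_mul_lintegral_inv {f W : α → ℝ≥0∞}
    (hf : AEMeasurable f ρ) (hW : AEMeasurable W ρ) (hW0 : ∀ᵐ a ∂ρ, W a ≠ 0)
    (hWtop : ∀ᵐ a ∂ρ, W a ≠ ∞) :
    (∫⁻ a, f a ∂ρ) ^ 2 ≤ (∫⁻ a, f a ^ 2 * W a ∂ρ) * ∫⁻ a, (W a)⁻¹ ∂ρ := by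
  have hcancel : ∀ᵐ a ∂ρ, (W a)⁻¹ * W a = 1 := by
    filter_upwards [hW0, hWtop] with a h0 htop using ENNReal.inv_mul_cancel h0 htop
  calc (∫⁻ a, f a ∂ρ) ^ 2 = (∫⁻ a, (W a)⁻¹ * (f a * W a) ∂ρ) ^ 2 := by
        congr 1
        refine lintegral_congr_ae ?_
        filter_upwards [hcancel] with a h
        rw [mul_left_comm, h, mul_one]
    _ ≤ (∫⁻ a, (W a)⁻¹ ∂ρ) * ∫⁻ a, (W a)⁻¹ * (f a * W a) ^ 2 ∂ρ :=
        sq_lintegral_mul_le_lintegral_mul_sq hW.inv (hf.mul hW)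
    _ = (∫⁻ a, f a ^ 2 * W a ∂ρ) * ∫⁻ a, (W a)⁻¹ ∂ρ := by
        rw [mul_comm]
        congr 1
        refine lintegral_congr_ae ?_
        filter_upwards [hcancel] with a h
        calc (W a)⁻¹ * (f a * W a) ^ 2 = f a ^ 2 * W a * ((W a)⁻¹ * W a) := by ring
          _ = _ := by rw [h, mul_one]

theorem le_ofReal_mul_rpow_half {x A : ℝ≥0∞} {r : ℝ} (hr : 0 ≤ r)
    (h : x ^ 2 ≤ ENNReal.ofReal (r ^ 2) * A) : x ≤ ENNReal.ofReal r * A ^ ((1:ℝ)/2) :=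
  calc x = (x ^ 2) ^ ((1:ℝ)/2) := (sq_rpow_half x).symm
    _ ≤ (ENNReal.ofReal (r ^ 2) * A) ^ ((1:ℝ)/2) := rpow_le_rpow h (by norm_num)
    _ = _ := by rw [mul_rpow_of_nonneg _ _ (by norm_num), ENNReal.ofReal_pow hr, sq_rpow_half]

end ENNReal

theorem lintegral_Iio_comp_sub_left (k : ℝ → ℝ≥0∞) (s : ℝ) :
    ∫⁻ σ in Iio s, k (s - σ) = ∫⁻ t in Ioi 0, k t := by
  rw [← lintegral_indicator measurableSet_Iio, ← lintegral_indicator measurableSet_Ioi,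
    ← lintegral_sub_left_eq_self ((Ioi 0).indicator k) s]
  congr 1 with σ
  simp [indicator, sub_pos]

theorem lintegral_Ioi_comp_sub_right (k : ℝ → ℝ≥0∞) (σ : ℝ) :
    ∫⁻ s in Ioi σ, k (s - σ) = ∫⁻ t in Ioi 0, k t := by
  rw [← lintegral_indicator measurableSet_Ioi, ← lintegral_indicator measurableSet_Ioi,
    ← lintegral_sub_right_eq_self ((Ioi 0).indicator k) σ]
  congr 1 with s
  simp [indicator, sub_pos]

theorem lintegral_Ioi_ofReal_exp_neg_mul {b : ℝ} (hb : 0 < b) :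
    ∫⁻ t in Ioi 0, ENNReal.ofReal (Real.exp (-b * t)) = ENNReal.ofReal b⁻¹ := by
  rw [← ofReal_integral_eq_lintegral_ofReal (integrableOn_exp_mul_Ioi (by linarith) 0)
    (ae_of_all _ fun t => (Real.exp_pos _).le), integral_exp_mul_Ioi (by linarith)]
  simp [neg_div_neg_eq, one_div]

theorem lintegral_Ioi_lintegral_Ioo_mul_comp_sub {f k : ℝ → ℝ≥0∞}
    (hf : AEMeasurable f (volume.restrict (Ioi 0))) (hk : Measurable k) :
    ∫⁻ s in Ioi 0, ∫⁻ σ in Ioo 0 s, f σ * k (s - σ)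
      = (∫⁻ σ in Ioi 0, f σ) * ∫⁻ t in Ioi 0, k t := by
  set K : ℝ → ℝ → ℝ≥0∞ := fun s σ => (Iio s).indicator (fun σ => f σ * k (s - σ)) σ
  have hK : AEMeasurable (Function.uncurry K) (volume.prod (volume.restrict (Ioi 0))) :=
    (hf.comp_snd.mul (hk.comp (measurable_fst.sub measurable_snd)).aemeasurable).indicator
      (measurableSet_lt measurable_snd measurable_fst)
  have hinner (s : ℝ) : ∫⁻ σ in Ioo 0 s, f σ * k (s - σ) = ∫⁻ σ in Ioi 0, K s σ := by
    rw [lintegral_indicator measurableSet_Iio, Measure.restrict_restrict measurableSet_Iio,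
      Iio_inter_Ioi]
  have hsupp : (Function.support fun s => ∫⁻ σ in Ioo 0 s, f σ * k (s - σ)) ⊆ Ioi 0 := by
    intro s hs
    by_contra h
    rw [mem_Ioi, not_lt] at h
    simp [Ioo_eq_empty_of_le h] at hs
  have hswapped (σ : ℝ) : ∫⁻ s, K s σ = f σ * ∫⁻ t in Ioi 0, k t := by
    rw [← lintegral_Ioi_comp_sub_right k σ,
      ← lintegral_const_mul _ (by fun_prop : Measurable fun s => k (s - σ)),
      ← lintegral_indicator measurableSet_Ioi]
    congr 1 with s
  rw [setLIntegral_eq_of_support_subset hsupp]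
  simp_rw [hinner]
  rw [lintegral_lintegral_swap hK]
  simp_rw [hswapped]
  exact lintegral_mul_const'' _ hf

def HasUniformExpDecay (μ : ℝ → ℝ) (C δ : ℝ) : Prop :=
  ∀ σ ≥ (0:ℝ), ∀ s > (0:ℝ), μ (σ + s) ≤ C * Real.exp (-δ * σ) * μ s

namespace HasUniformExpDecay

variable {μ : ℝ → ℝ} {C δ : ℝ}

theorem le_mul_of_lt (h : HasUniformExpDecay μ C δ) {σ s : ℝ} (hσ : 0 < σ) (hσs : σ ≤ s) :
    μ s ≤ C * Real.exp (-δ * (s - σ)) * μ σ := by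
  simpa using h (s - σ) (sub_nonneg.2 hσs) σ hσ

theorem ofReal_mul_sq_lintegral_Ioo_le (h : HasUniformExpDecay μ C δ) (hC : 0 ≤ C) (hδ : 0 < δ)
    {s : ℝ} (hμ : AEMeasurable μ (volume.restrict (Ioo 0 s))) {G : ℝ → ℝ≥0∞}
    (hG : AEMeasurable G (volume.restrict (Ioo 0 s))) :
    ENNReal.ofReal (μ s) * (∫⁻ σ in Ioo 0 s, G σ) ^ 2
      ≤ ENNReal.ofReal (2 * C / δ) * ∫⁻ σ in Ioo 0 s,
          ENNReal.ofReal (μ σ) * G σ ^ 2 * ENNReal.ofReal (Real.exp (-(δ / 2) * (s - σ))) := by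
  rcases le_or_gt (μ s) 0 with hs | hs
  · simp [ENNReal.ofReal_eq_zero.2 hs]
  set E : ℝ → ℝ := fun σ => Real.exp (-(δ / 2) * (s - σ))
  set W : ℝ → ℝ≥0∞ := fun σ => ENNReal.ofReal (μ σ) * ENNReal.ofReal (E σ)
  have hpos (σ : ℝ) (hσ : σ ∈ Ioo 0 s) : 0 < μ σ :=
    pos_of_mul_pos_right (hs.trans_le (h.le_mul_of_lt hσ.1 hσ.2.le)) (by positivity)
  have hW (σ : ℝ) (hσ : σ ∈ Ioo 0 s) : W σ = ENNReal.ofReal (μ σ * E σ) :=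
    (ENNReal.ofReal_mul (hpos σ hσ).le).symm
  have hWinv (σ : ℝ) (hσ : σ ∈ Ioo 0 s) :
      ENNReal.ofReal (μ s) * (W σ)⁻¹ ≤ ENNReal.ofReal C * ENNReal.ofReal (E σ) := by
    have hμE : 0 < μ σ * E σ := mul_pos (hpos σ hσ) (Real.exp_pos _)
    rw [hW σ hσ, ← ENNReal.ofReal_inv_of_pos hμE, ← ENNReal.ofReal_mul hs.le,
      ← ENNReal.ofReal_mul hC, ← div_eq_mul_inv]
    refine ENNReal.ofReal_le_ofReal ((div_le_iff₀ hμE).2 ?_)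
    calc μ s ≤ C * Real.exp (-δ * (s - σ)) * μ σ := h.le_mul_of_lt hσ.1 hσ.2.le
      _ = C * E σ * (μ σ * E σ) := by
        simp only [E, mul_mul_mul_comm, ← Real.exp_add]
        ring_nf
  have hE : ∫⁻ σ in Ioo 0 s, ENNReal.ofReal (E σ) ≤ ENNReal.ofReal (δ / 2)⁻¹ :=
    calc ∫⁻ σ in Ioo 0 s, ENNReal.ofReal (E σ)
        ≤ ∫⁻ σ in Iio s, ENNReal.ofReal (E σ) := lintegral_mono_set Ioo_subset_Iio_self
      _ = ENNReal.ofReal (δ / 2)⁻¹ := by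
        rw [lintegral_Iio_comp_sub_left (fun t => ENNReal.ofReal (Real.exp (-(δ / 2) * t))),
          lintegral_Ioi_ofReal_exp_neg_mul (by positivity)]
  have hCS := ENNReal.sq_lintegral_le_lintegral_mul_mul_lintegral_inv (W := W) hG
    (hμ.ennreal_ofReal.mul (by fun_prop : Measurable fun σ => ENNReal.ofReal (E σ)).aemeasurable)
    ((ae_restrict_iff' measurableSet_Ioo).2 (ae_of_all _ fun σ hσ => by
      rw [hW σ hσ]; exact (ENNReal.ofReal_pos.2 (mul_pos (hpos σ hσ) (Real.exp_pos _))).ne'))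
    ((ae_restrict_iff' measurableSet_Ioo).2 (ae_of_all _ fun σ hσ => by
      rw [hW σ hσ]; exact ENNReal.ofReal_ne_top))
  calc ENNReal.ofReal (μ s) * (∫⁻ σ in Ioo 0 s, G σ) ^ 2
      ≤ ENNReal.ofReal (μ s) * ((∫⁻ σ in Ioo 0 s, G σ ^ 2 * W σ) * ∫⁻ σ in Ioo 0 s, (W σ)⁻¹) := by
        gcongr
    _ = (∫⁻ σ in Ioo 0 s, G σ ^ 2 * W σ) * ∫⁻ σ in Ioo 0 s, ENNReal.ofReal (μ s) * (W σ)⁻¹ := by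
        rw [lintegral_const_mul' _ _ ENNReal.ofReal_ne_top]; ring
    _ ≤ (∫⁻ σ in Ioo 0 s, G σ ^ 2 * W σ) *
          ∫⁻ σ in Ioo 0 s, ENNReal.ofReal C * ENNReal.ofReal (E σ) := by
        gcongr _ * ?_
        exact setLIntegral_mono' measurableSet_Ioo hWinv
    _ ≤ (∫⁻ σ in Ioo 0 s, G σ ^ 2 * W σ) * (ENNReal.ofReal C * ENNReal.ofReal (δ / 2)⁻¹) := by
        rw [lintegral_const_mul' _ _ ENNReal.ofReal_ne_top]
        gcongr
    _ = _ := by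
        rw [← ENNReal.ofReal_mul hC, show C * (δ / 2)⁻¹ = 2 * C / δ by field_simp, mul_comm]
        simp only [W]
        congr 2 with σ
        ring

end HasUniformExpDecay

theorem stmt0_general
    (μ : ℝ → ℝ) (hμ0 : ∀ s, 0 ≤ μ s)
    (hint : IntegrableOn μ (Ioi 0)) (m : ℝ) (hm : m = ∫ s in Ioi 0, μ s)
    (C δ : ℝ) (hC : 1 ≤ C) (hδ : 0 < δ)
    (hdec : ∀ σ ≥ (0:ℝ), ∀ s > (0:ℝ), μ (σ + s) ≤ C * Real.exp (-δ * σ) * μ s)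
    (g : ℝ → ℝ) (hg : Measurable g) :
    ∫⁻ s in Ioi 0, ENNReal.ofReal (μ s) * (∫⁻ σ in Ioo 0 s, ENNReal.ofReal (g σ))
      ≤ ENNReal.ofReal (Real.sqrt (4 * C * m) / δ) *
        (∫⁻ σ in Ioi 0, ENNReal.ofReal (μ σ) * ENNReal.ofReal (g σ) ^ 2) ^ ((1:ℝ)/2) := by
  set F : ℝ → ℝ≥0∞ := fun s => ∫⁻ σ in Ioo 0 s, ENNReal.ofReal (g σ)
  have hμ : AEMeasurable μ (volume.restrict (Ioi 0)) := hint.aestronglyMeasurable.aemeasurable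
  have hF : Monotone F := fun a b hab => lintegral_mono_set (Ioo_subset_Ioo_right hab)
  have hm0 : 0 ≤ m := hm ▸ setIntegral_nonneg measurableSet_Ioi fun s _ => hμ0 s
  have hmass : ∫⁻ s in Ioi 0, ENNReal.ofReal (μ s) = ENNReal.ofReal m := by
    rw [hm, ofReal_integral_eq_lintegral_ofReal hint (ae_of_all _ fun s => hμ0 s)]
  have hpointwise : ∫⁻ s in Ioi 0, ENNReal.ofReal (μ s) * F s ^ 2
      ≤ ENNReal.ofReal (2 * C / δ) * ∫⁻ s in Ioi 0, ∫⁻ σ in Ioo 0 s,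
          ENNReal.ofReal (μ σ) * ENNReal.ofReal (g σ) ^ 2 *
            ENNReal.ofReal (Real.exp (-(δ / 2) * (s - σ))) := by
    rw [← lintegral_const_mul' _ _ ENNReal.ofReal_ne_top]
    exact setLIntegral_mono' measurableSet_Ioi fun s _ =>
      HasUniformExpDecay.ofReal_mul_sq_lintegral_Ioo_le hdec (by linarith) hδ
        (hμ.mono_measure (Measure.restrict_mono Ioo_subset_Ioi_self le_rfl))
        hg.ennreal_ofReal.aemeasurable
  have hfubini := lintegral_Ioi_lintegral_Ioo_mul_comp_sub
    (f := fun σ => ENNReal.ofReal (μ σ) * ENNReal.ofReal (g σ) ^ 2)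
    (hμ.ennreal_ofReal.mul (hg.ennreal_ofReal.pow_const 2).aemeasurable)
    (by fun_prop : Measurable fun t => ENNReal.ofReal (Real.exp (-(δ / 2) * t)))
  rw [lintegral_Ioi_ofReal_exp_neg_mul (by positivity)] at hfubini
  refine ENNReal.le_ofReal_mul_rpow_half (by positivity) ?_
  calc (∫⁻ s in Ioi 0, ENNReal.ofReal (μ s) * F s) ^ 2
      ≤ (∫⁻ s in Ioi 0, ENNReal.ofReal (μ s)) * ∫⁻ s in Ioi 0, ENNReal.ofReal (μ s) * F s ^ 2 :=
        ENNReal.sq_lintegral_mul_le_lintegral_mul_sq hμ.ennreal_ofReal hF.measurable.aemeasurable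
    _ ≤ ENNReal.ofReal m * (ENNReal.ofReal (2 * C / δ) *
          ((∫⁻ σ in Ioi 0, ENNReal.ofReal (μ σ) * ENNReal.ofReal (g σ) ^ 2) *
            ENNReal.ofReal (δ / 2)⁻¹)) := by
        rw [hmass, ← hfubini]
        gcongr
    _ = _ := by
        rw [mul_comm _ (ENNReal.ofReal _), ← mul_assoc, ← mul_assoc, ← ENNReal.ofReal_mul hm0,
          ← ENNReal.ofReal_mul (by positivity), div_pow, Real.sq_sqrt (by positivity)]
        congr 2
        field_simp
        ring

theorem stmt0
    (μ : ℝ → ℝ) (hμ0 : ∀ s, 0 ≤ μ s) (hmono : AntitoneOn μ (Ici 0))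
    (hint : IntegrableOn μ (Ioi 0)) (m : ℝ) (hm : m = ∫ s in Ioi 0, μ s)
    (hmpos : 0 < m)
    (C δ : ℝ) (hC : 1 ≤ C) (hδ : 0 < δ)
    (hdec : ∀ σ ≥ (0:ℝ), ∀ s > (0:ℝ), μ (σ + s) ≤ C * Real.exp (-δ * σ) * μ s)
    (g : ℝ → ℝ) (hg : Measurable g) (hg0 : ∀ σ, 0 ≤ g σ) :
    ∫⁻ s in Ioi 0, ENNReal.ofReal (μ s) * (∫⁻ σ in Ioo 0 s, ENNReal.ofReal (g σ))
      ≤ ENNReal.ofReal (Real.sqrt (4 * C * m) / δ) *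
        (∫⁻ σ in Ioi 0, ENNReal.ofReal (μ σ) * ENNReal.ofReal (g σ) ^ 2) ^ ((1:ℝ)/2) :=
  stmt0_general μ hμ0 hint m hm C δ hC hδ hdec g hg
end

section
/- Let μ satisfy μ(σ+s) ≤ C e^{-δσ} μ(s) for all σ ≥ 0, s > 0 (with C ≥ 1, δ > 0), and let g : (0,∞) → [0,∞) be measurable. Define G(s) = ∫₀^s e^{-(δ/2)(s-σ)} √(μ(σ)) g(σ) dσ. Then ∫₀^∞ μ(s) (∫₀^s g(σ) dσ) ds ≤ √C · ∫₀^∞ √(μ(s)) G(s) ds. -/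
/-!
For `0 < σ < s` the decay hypothesis gives `√μ(s) ≤ √C e^{-(δ/2)(s-σ)} √μ(σ)`. Writing
`μ(s) g(σ) = √μ(s) · √μ(s) g(σ)` and bounding one of the two square roots this way gives the
inequality pointwise in `(s, σ)`, before any integration.
-/

open MeasureTheory Set ENNReal

lemma Real.sqrt_le_of_le_mul_exp {a b C δ t : ℝ} (hb : 0 ≤ b)
    (h : a ≤ C * Real.exp (-δ * t) * b) :
    √a ≤ √C * Real.exp (-(δ / 2) * t) * √b := by
  calc √a ≤ √(C * Real.exp (-δ * t) * b) := Real.sqrt_le_sqrt h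
    _ = √C * Real.exp (-(δ / 2) * t) * √b := by
      rw [Real.sqrt_mul' _ hb, Real.sqrt_mul' _ (Real.exp_nonneg _), ← Real.exp_half]
      ring_nf

lemma Real.mul_le_of_le_mul_exp {a b c C δ t : ℝ} (ha : 0 ≤ a) (hb : 0 ≤ b) (hc : 0 ≤ c)
    (h : a ≤ C * Real.exp (-δ * t) * b) :
    a * c ≤ √C * (√a * (Real.exp (-(δ / 2) * t) * √b * c)) := by
  calc a * c = √a * √a * c := by rw [Real.mul_self_sqrt ha]
    _ ≤ √a * (√C * Real.exp (-(δ / 2) * t) * √b) * c := by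
      gcongr
      exact Real.sqrt_le_of_le_mul_exp hb h
    _ = √C * (√a * (Real.exp (-(δ / 2) * t) * √b * c)) := by ring

theorem stmt1_general
    (μ : ℝ → ℝ) (hμ0 : ∀ s, 0 ≤ μ s)
    (C δ : ℝ)
    (hdec : ∀ σ ≥ (0:ℝ), ∀ s > (0:ℝ), μ (σ + s) ≤ C * Real.exp (-δ * σ) * μ s)
    (g : ℝ → ℝ) (hg0 : ∀ σ, 0 ≤ g σ)
    (G : ℝ → ℝ≥0∞)
    (hG : ∀ s, G s = ∫⁻ σ in Ioo 0 s,
        ENNReal.ofReal (Real.exp (-(δ/2) * (s - σ)) * Real.sqrt (μ σ) * g σ)) :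
    ∫⁻ s in Ioi 0, ENNReal.ofReal (μ s) * (∫⁻ σ in Ioo 0 s, ENNReal.ofReal (g σ))
      ≤ ENNReal.ofReal (Real.sqrt C) *
        ∫⁻ s in Ioi 0, ENNReal.ofReal (Real.sqrt (μ s)) * G s := by
  simp only [hG, ← lintegral_const_mul' _ _ ofReal_ne_top]
  refine setLIntegral_mono' measurableSet_Ioi fun s _ ↦
    setLIntegral_mono' measurableSet_Ioo fun σ hσ ↦ ?_
  have hμs : μ s ≤ C * Real.exp (-δ * (s - σ)) * μ σ := by
    simpa using hdec (s - σ) (by linarith [hσ.2]) σ hσ.1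
  rw [← ofReal_mul (Real.sqrt_nonneg _), ← ofReal_mul (hμ0 s),
    ← ofReal_mul (Real.sqrt_nonneg C)]
  exact ofReal_le_ofReal (Real.mul_le_of_le_mul_exp (hμ0 s) (hμ0 σ) (hg0 σ) hμs)

theorem stmt1
    (μ : ℝ → ℝ) (hμmeas : Measurable μ) (hμ0 : ∀ s, 0 ≤ μ s)
    (C δ : ℝ) (hC : 1 ≤ C) (hδ : 0 < δ)
    (hdec : ∀ σ ≥ (0:ℝ), ∀ s > (0:ℝ), μ (σ + s) ≤ C * Real.exp (-δ * σ) * μ s)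
    (g : ℝ → ℝ) (hg : Measurable g) (hg0 : ∀ σ, 0 ≤ g σ)
    (G : ℝ → ℝ≥0∞)
    (hG : ∀ s, G s = ∫⁻ σ in Ioo 0 s,
        ENNReal.ofReal (Real.exp (-(δ/2) * (s - σ)) * Real.sqrt (μ σ) * g σ)) :
    ∫⁻ s in Ioi 0, ENNReal.ofReal (μ s) * (∫⁻ σ in Ioo 0 s, ENNReal.ofReal (g σ))
      ≤ ENNReal.ofReal (Real.sqrt C) *
        ∫⁻ s in Ioi 0, ENNReal.ofReal (Real.sqrt (μ s)) * G s :=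
  stmt1_general μ hμ0 C δ hdec g hg0 G hG
end

section
/- Let μ : (0,∞) → [0,∞) be integrable with m = ∫₀^∞ μ > 0 and satisfy μ(σ+s) ≤ C e^{-δσ} μ(s) for all σ ≥ 0, s > 0 (C ≥ 1, δ > 0). Let H be a Hilbert space and η, ξ ∈ L²_μ((0,∞); H). Then ∫₀^∞ μ(s) ‖η(s)‖ (∫₀^s ‖ξ(σ)‖ dσ) ds ≤ (2√C/δ) ‖η‖_M ‖ξ‖_M, where ‖·‖_M is the L²_μ norm. -/
/-!
Writing `x = √μ ‖η‖` and `y = √μ ‖ξ‖`, the decay of `μ` gives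
`√μ(s) ≤ √C e^{-δ(s-σ)/2} √μ(σ)` for `0 < σ ≤ s`, so the integrand is dominated by
`√C k(s - σ) x(s) y(σ)` with `k(u) = e^{-δu/2}` on `u ≥ 0`. The Schur test (Cauchy–Schwarz on the
product space against the kernel, whose row and column integrals all equal `‖k‖₁ = 2/δ`) bounds
the resulting double integral by `‖k‖₁ ‖x‖₂ ‖y‖₂`.
-/

open MeasureTheory Set Real
open scoped ENNReal

theorem ENNReal.rpow_half_mul_self (x : ℝ≥0∞) : x ^ (1 / 2 : ℝ) * x ^ (1 / 2 : ℝ) = x := by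
  rw [← ENNReal.rpow_add_of_nonneg _ _ (by norm_num) (by norm_num)]
  norm_num

theorem lintegral_lintegral_mul_le_of_schur {α β : Type*} [MeasurableSpace α] [MeasurableSpace β]
    {μ : Measure α} {ν : Measure β} [SFinite μ] [SFinite ν] {K : α → β → ℝ≥0∞}
    (hK : Measurable (Function.uncurry K)) {M : ℝ≥0∞}
    (hrow : ∀ᵐ x ∂μ, ∫⁻ y, K x y ∂ν ≤ M) (hcol : ∀ᵐ y ∂ν, ∫⁻ x, K x y ∂μ ≤ M)
    {f : α → ℝ≥0∞} {g : β → ℝ≥0∞} (hf : AEMeasurable f μ) (hg : AEMeasurable g ν) :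
    ∫⁻ x, ∫⁻ y, K x y * (f x * g y) ∂ν ∂μ
      ≤ M * (∫⁻ x, f x ^ 2 ∂μ) ^ (1 / 2 : ℝ) * (∫⁻ y, g y ^ 2 ∂ν) ^ (1 / 2 : ℝ) := by
  set k : α × β → ℝ≥0∞ := fun p => K p.1 p.2 ^ (1 / 2 : ℝ)
  have hk : Measurable k := hK.pow_const _
  have hk_sq : ∀ p, k p ^ (2 : ℝ) = K p.1 p.2 := fun p => by
    rw [← ENNReal.rpow_mul]; norm_num
  have hK_row : ∀ x, Measurable (K x) := fun x => hK.comp measurable_prodMk_left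
  have hK_col : ∀ y, Measurable (fun x => K x y) := fun y => hK.comp measurable_prodMk_right
  have hcs := ENNReal.lintegral_mul_le_Lp_mul_Lq (μ.prod ν) Real.HolderConjugate.two_two
    (hk.aemeasurable.mul hf.comp_fst) (hk.aemeasurable.mul hg.comp_snd)
  have hf_sq : ∫⁻ p, (k p * f p.1) ^ (2 : ℝ) ∂μ.prod ν ≤ M * ∫⁻ x, f x ^ 2 ∂μ := by
    simp_rw [ENNReal.mul_rpow_of_nonneg _ _ zero_le_two, hk_sq, ENNReal.rpow_two]
    rw [lintegral_prod (fun p => K p.1 p.2 * f p.1 ^ 2)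
      (hK.aemeasurable.mul (hf.comp_fst.pow_const 2)), ← lintegral_const_mul'' _ (hf.pow_const 2)]
    refine lintegral_mono_ae (hrow.mono fun x hx => ?_)
    change ∫⁻ y, K x y * f x ^ 2 ∂ν ≤ M * f x ^ 2
    rw [lintegral_mul_const _ (hK_row x)]
    gcongr
  have hg_sq : ∫⁻ p, (k p * g p.2) ^ (2 : ℝ) ∂μ.prod ν ≤ M * ∫⁻ y, g y ^ 2 ∂ν := by
    simp_rw [ENNReal.mul_rpow_of_nonneg _ _ zero_le_two, hk_sq, ENNReal.rpow_two]
    rw [lintegral_prod_symm (fun p => K p.1 p.2 * g p.2 ^ 2)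
      (hK.aemeasurable.mul (hg.comp_snd.pow_const 2)), ← lintegral_const_mul'' _ (hg.pow_const 2)]
    refine lintegral_mono_ae (hcol.mono fun y hy => ?_)
    change ∫⁻ x, K x y * g y ^ 2 ∂μ ≤ M * g y ^ 2
    rw [lintegral_mul_const _ (hK_col y)]
    gcongr
  calc ∫⁻ x, ∫⁻ y, K x y * (f x * g y) ∂ν ∂μ
      = ∫⁻ p, ((k * fun p : α × β => f p.1) * (k * fun p : α × β => g p.2)) p ∂μ.prod ν := by
        rw [lintegral_prod _ (by fun_prop)]
        refine lintegral_congr fun x => lintegral_congr fun y => ?_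
        simp only [Pi.mul_apply]
        rw [mul_mul_mul_comm, ← sq, ← ENNReal.rpow_two, hk_sq]
    _ ≤ _ := hcs
    _ ≤ (M * ∫⁻ x, f x ^ 2 ∂μ) ^ (1 / 2 : ℝ) * (M * ∫⁻ y, g y ^ 2 ∂ν) ^ (1 / 2 : ℝ) := by
        gcongr
        exacts [hf_sq, hg_sq]
    _ = M * (∫⁻ x, f x ^ 2 ∂μ) ^ (1 / 2 : ℝ) * (∫⁻ y, g y ^ 2 ∂ν) ^ (1 / 2 : ℝ) := by
        rw [ENNReal.mul_rpow_of_nonneg _ _ (by norm_num),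
          ENNReal.mul_rpow_of_nonneg _ _ (by norm_num), mul_mul_mul_comm,
          ENNReal.rpow_half_mul_self, mul_assoc]

noncomputable def expKernel (c : ℝ) : ℝ → ℝ≥0∞ :=
  (Ici 0).indicator fun u => ENNReal.ofReal (exp (-c * u))

theorem measurable_expKernel (c : ℝ) : Measurable (expKernel c) :=
  (by fun_prop : Measurable fun u => ENNReal.ofReal (exp (-c * u))).indicator measurableSet_Ici

theorem lintegral_expKernel {c : ℝ} (hc : 0 < c) : ∫⁻ u, expKernel c u = ENNReal.ofReal c⁻¹ := by
  rw [expKernel, lintegral_indicator measurableSet_Ici, setLIntegral_congr Ioi_ae_eq_Ici.symm,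
    ← ofReal_integral_eq_lintegral_ofReal (exp_neg_integrableOn_Ioi 0 hc)
      (ae_of_all _ fun _ => (exp_pos _).le), integral_exp_mul_Ioi (by linarith) 0]
  simp

theorem sqrt_le_of_decay {μ : ℝ → ℝ} {C δ : ℝ}
    (hdec : ∀ σ ≥ (0:ℝ), ∀ s > (0:ℝ), μ (σ + s) ≤ C * exp (-δ * σ) * μ s)
    {σ s : ℝ} (hσ : 0 < σ) (hσs : σ ≤ s) (hμσ : 0 ≤ μ σ) :
    √(μ s) ≤ √C * exp (-(δ / 2) * (s - σ)) * √(μ σ) := by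
  have h := Real.sqrt_le_sqrt (hdec (s - σ) (sub_nonneg.2 hσs) σ hσ)
  have hexp : exp (-δ * (s - σ)) = exp (-(δ / 2) * (s - σ)) ^ 2 := by
    rw [← exp_nat_mul]; ring_nf
  rwa [sub_add_cancel, hexp, Real.sqrt_mul' _ hμσ, Real.sqrt_mul' _ (sq_nonneg _),
    Real.sqrt_sq (exp_pos _).le] at h

theorem lintegral_lintegral_expKernel_mul_le {c : ℝ} (hc : 0 < c) (S : Set ℝ)
    {f g : ℝ → ℝ≥0∞} (hf : AEMeasurable f (volume.restrict S))
    (hg : AEMeasurable g (volume.restrict S)) :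
    ∫⁻ x in S, ∫⁻ y in S, expKernel c (x - y) * (f x * g y)
      ≤ ENNReal.ofReal c⁻¹ * (∫⁻ x in S, f x ^ 2) ^ (1 / 2 : ℝ)
          * (∫⁻ y in S, g y ^ 2) ^ (1 / 2 : ℝ) := by
  refine lintegral_lintegral_mul_le_of_schur (K := fun x y => expKernel c (x - y))
    ((measurable_expKernel c).comp (measurable_fst.sub measurable_snd))
    (ae_of_all _ fun x => ?_) (ae_of_all _ fun y => ?_) hf hg
  · exact (setLIntegral_le_lintegral S _).trans_eq
      (by rw [lintegral_sub_left_eq_self (expKernel c), lintegral_expKernel hc])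
  · exact (setLIntegral_le_lintegral S _).trans_eq
      (by rw [lintegral_sub_right_eq_self (expKernel c), lintegral_expKernel hc])

theorem lintegral_ofReal_sqrt_mul_sq_rpow_half {μ w : ℝ → ℝ} {S : Set ℝ} (hμ0 : ∀ s, 0 ≤ μ s)
    (hw : ∀ s, 0 ≤ w s) (hint : IntegrableOn (fun s => μ s * w s ^ 2) S) :
    (∫⁻ s in S, ENNReal.ofReal (√(μ s) * w s) ^ 2) ^ (1 / 2 : ℝ)
      = ENNReal.ofReal √(∫ s in S, μ s * w s ^ 2) := by
  have hnonneg : ∀ s, 0 ≤ μ s * w s ^ 2 := fun s => mul_nonneg (hμ0 s) (sq_nonneg _)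
  simp_rw [← ENNReal.ofReal_pow (mul_nonneg (Real.sqrt_nonneg _) (hw _)), mul_pow,
    Real.sq_sqrt (hμ0 _)]
  rw [← ofReal_integral_eq_lintegral_ofReal hint (ae_of_all _ hnonneg),
    ENNReal.ofReal_rpow_of_nonneg (integral_nonneg hnonneg)
      (by norm_num), Real.sqrt_eq_rpow]

theorem ofReal_mul_le_expKernel_mul {μ u v : ℝ → ℝ} {C δ : ℝ} (hμ0 : ∀ s, 0 ≤ μ s)
    (hdec : ∀ σ ≥ (0:ℝ), ∀ s > (0:ℝ), μ (σ + s) ≤ C * exp (-δ * σ) * μ s)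
    {σ s : ℝ} (hσ : 0 < σ) (hσs : σ ≤ s) (hu : 0 ≤ u s) (hv : 0 ≤ v σ) :
    ENNReal.ofReal (μ s * u s * v σ)
      ≤ ENNReal.ofReal √C * (expKernel (δ / 2) (s - σ)
          * (ENNReal.ofReal (√(μ s) * u s) * ENNReal.ofReal (√(μ σ) * v σ))) := by
  have hsqrt := sqrt_le_of_decay hdec hσ hσs (hμ0 σ)
  rw [expKernel, indicator_of_mem (mem_Ici.2 (sub_nonneg.2 hσs)),
    ← ENNReal.ofReal_mul (by positivity), ← ENNReal.ofReal_mul (by positivity),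
    ← ENNReal.ofReal_mul (by positivity)]
  refine ENNReal.ofReal_le_ofReal ?_
  calc μ s * u s * v σ = √(μ s) * (√(μ s) * u s) * v σ := by
        rw [← mul_assoc, Real.mul_self_sqrt (hμ0 s)]
    _ ≤ (√C * exp (-(δ / 2) * (s - σ)) * √(μ σ)) * (√(μ s) * u s) * v σ := by gcongr
    _ = _ := by ring

theorem enorm_mul_intervalIntegral_le {μ u v : ℝ → ℝ} {C δ : ℝ} (hμ0 : ∀ s, 0 ≤ μ s)
    (hdec : ∀ σ ≥ (0:ℝ), ∀ s > (0:ℝ), μ (σ + s) ≤ C * exp (-δ * σ) * μ s)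
    (hu : ∀ s, 0 ≤ u s) (hv : ∀ σ, 0 ≤ v σ) {s : ℝ} (hs : 0 < s) :
    ‖μ s * u s * ∫ σ in (0:ℝ)..s, v σ‖ₑ
      ≤ ENNReal.ofReal √C * ∫⁻ σ in Ioi 0, expKernel (δ / 2) (s - σ)
          * (ENNReal.ofReal (√(μ s) * u s) * ENNReal.ofReal (√(μ σ) * v σ)) := by
  have hint_le :
      ENNReal.ofReal (∫ σ in Ioc 0 s, v σ) ≤ ∫⁻ σ in Ioc 0 s, ENNReal.ofReal (v σ) := by
    rw [← Real.enorm_of_nonneg (setIntegral_nonneg measurableSet_Ioc fun σ _ => hv σ)]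
    refine (enorm_integral_le_lintegral_enorm _).trans_eq (lintegral_congr fun σ => ?_)
    exact Real.enorm_of_nonneg (hv σ)
  have hμu : 0 ≤ μ s * u s := mul_nonneg (hμ0 s) (hu s)
  rw [intervalIntegral.integral_of_le hs.le,
    Real.enorm_of_nonneg (mul_nonneg hμu (setIntegral_nonneg measurableSet_Ioc fun σ _ => hv σ)),
    ← lintegral_const_mul' _ _ ENNReal.ofReal_ne_top]
  calc ENNReal.ofReal (μ s * u s * ∫ σ in Ioc 0 s, v σ)
      ≤ ENNReal.ofReal (μ s * u s) * ∫⁻ σ in Ioc 0 s, ENNReal.ofReal (v σ) := by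
        rw [ENNReal.ofReal_mul hμu]; gcongr
    _ = ∫⁻ σ in Ioc 0 s, ENNReal.ofReal (μ s * u s * v σ) := by
        rw [← lintegral_const_mul' _ _ ENNReal.ofReal_ne_top]
        simp_rw [ENNReal.ofReal_mul hμu]
    _ ≤ ∫⁻ σ in Ioc 0 s, ENNReal.ofReal √C * (expKernel (δ / 2) (s - σ)
          * (ENNReal.ofReal (√(μ s) * u s) * ENNReal.ofReal (√(μ σ) * v σ))) :=
        setLIntegral_mono' measurableSet_Ioc fun σ hσ =>
          ofReal_mul_le_expKernel_mul hμ0 hdec hσ.1 hσ.2 (hu s) (hv σ)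
    _ ≤ _ := lintegral_mono_set Ioc_subset_Ioi_self

theorem integral_le_of_lintegral_enorm_le {α : Type*} [MeasurableSpace α] {μ : Measure α}
    {f : α → ℝ} {R : ℝ} (hR : 0 ≤ R) (h : ∫⁻ x, ‖f x‖ₑ ∂μ ≤ ENNReal.ofReal R) :
    ∫ x, f x ∂μ ≤ R := by
  have h' := (enorm_integral_le_lintegral_enorm f).trans h
  rw [← ofReal_norm, ENNReal.ofReal_le_ofReal_iff hR, Real.norm_eq_abs] at h'
  exact (le_abs_self _).trans h'

theorem stmt13_general
    {H : Type*} [NormedAddCommGroup H]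
    (μ : ℝ → ℝ) (hμ0 : ∀ s, 0 ≤ μ s) (hint : IntegrableOn μ (Ioi 0))
    (C δ : ℝ) (hδ : 0 < δ)
    (hdec : ∀ σ ≥ (0:ℝ), ∀ s > (0:ℝ), μ (σ + s) ≤ C * Real.exp (-δ * σ) * μ s)
    (η ξ : ℝ → H)
    (hηmeas : AEStronglyMeasurable η (volume.restrict (Ioi 0)))
    (hξmeas : AEStronglyMeasurable ξ (volume.restrict (Ioi 0)))
    (hη2 : IntegrableOn (fun s => μ s * ‖η s‖ ^ 2) (Ioi 0))
    (hξ2 : IntegrableOn (fun s => μ s * ‖ξ s‖ ^ 2) (Ioi 0)) :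
    ∫ s in Ioi 0, μ s * ‖η s‖ * (∫ σ in (0:ℝ)..s, ‖ξ σ‖)
      ≤ (2 * Real.sqrt C / δ) * Real.sqrt (∫ s in Ioi 0, μ s * ‖η s‖ ^ 2)
          * Real.sqrt (∫ s in Ioi 0, μ s * ‖ξ s‖ ^ 2) := by
  set a := ∫ s in Ioi 0, μ s * ‖η s‖ ^ 2
  set b := ∫ s in Ioi 0, μ s * ‖ξ s‖ ^ 2
  set f := fun s => ENNReal.ofReal (√(μ s) * ‖η s‖)
  set g := fun s => ENNReal.ofReal (√(μ s) * ‖ξ s‖)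
  have hμ := hint.aestronglyMeasurable.aemeasurable.sqrt
  have hf : AEMeasurable f (volume.restrict (Ioi 0)) :=
    (hμ.mul hηmeas.norm.aemeasurable).ennreal_ofReal
  have hg : AEMeasurable g (volume.restrict (Ioi 0)) :=
    (hμ.mul hξmeas.norm.aemeasurable).ennreal_ofReal
  refine integral_le_of_lintegral_enorm_le (by positivity) ?_
  calc ∫⁻ s in Ioi 0, ‖μ s * ‖η s‖ * ∫ σ in (0:ℝ)..s, ‖ξ σ‖‖ₑ
      ≤ ∫⁻ s in Ioi 0, ENNReal.ofReal √C
          * ∫⁻ σ in Ioi 0, expKernel (δ / 2) (s - σ) * (f s * g σ) :=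
        setLIntegral_mono' measurableSet_Ioi fun s hs => enorm_mul_intervalIntegral_le hμ0 hdec
          (fun _ => norm_nonneg _) (fun _ => norm_nonneg _) hs
    _ = ENNReal.ofReal √C
          * ∫⁻ s in Ioi 0, ∫⁻ σ in Ioi 0, expKernel (δ / 2) (s - σ) * (f s * g σ) :=
        lintegral_const_mul' _ _ ENNReal.ofReal_ne_top
    _ ≤ ENNReal.ofReal √C
          * (ENNReal.ofReal (δ / 2)⁻¹ * ENNReal.ofReal √a * ENNReal.ofReal √b) := by
        rw [← lintegral_ofReal_sqrt_mul_sq_rpow_half hμ0 (fun _ => norm_nonneg _) hη2,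
          ← lintegral_ofReal_sqrt_mul_sq_rpow_half hμ0 (fun _ => norm_nonneg _) hξ2]
        gcongr
        exact lintegral_lintegral_expKernel_mul_le (half_pos hδ) _ hf hg
    _ = ENNReal.ofReal (2 * √C / δ * √a * √b) := by
        rw [← ENNReal.ofReal_mul (by positivity), ← ENNReal.ofReal_mul (by positivity),
          ← ENNReal.ofReal_mul (by positivity)]
        congr 1
        field_simp

theorem stmt13
    {H : Type*} [NormedAddCommGroup H]
    (μ : ℝ → ℝ) (hμ0 : ∀ s, 0 ≤ μ s) (hint : IntegrableOn μ (Ioi 0))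
    (m : ℝ) (hm : m = ∫ s in Ioi 0, μ s) (hmpos : 0 < m)
    (C δ : ℝ) (hC : 1 ≤ C) (hδ : 0 < δ)
    (hdec : ∀ σ ≥ (0:ℝ), ∀ s > (0:ℝ), μ (σ + s) ≤ C * Real.exp (-δ * σ) * μ s)
    (η ξ : ℝ → H)
    (hηmeas : AEStronglyMeasurable η (volume.restrict (Ioi 0)))
    (hξmeas : AEStronglyMeasurable ξ (volume.restrict (Ioi 0)))
    (hη2 : IntegrableOn (fun s => μ s * ‖η s‖ ^ 2) (Ioi 0))
    (hξ2 : IntegrableOn (fun s => μ s * ‖ξ s‖ ^ 2) (Ioi 0)) :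
    ∫ s in Ioi 0, μ s * ‖η s‖ * (∫ σ in (0:ℝ)..s, ‖ξ σ‖)
      ≤ (2 * Real.sqrt C / δ) * Real.sqrt (∫ s in Ioi 0, μ s * ‖η s‖ ^ 2)
          * Real.sqrt (∫ s in Ioi 0, μ s * ‖ξ s‖ ^ 2) :=
  stmt13_general μ hμ0 hint C δ hδ hdec η ξ hηmeas hξmeas hη2 hξ2
end

section
/- Let Σ(t) be the right-translation semigroup on M = L²_μ((0,∞); V) (V a normed space), defined by [Σ(t)η](s) = 0 for s ≤ t and η(s-t) for s > t. Suppose there exist K ≥ 1, ω > 0 such that ‖Σ(t)η‖_M ≤ K e^{-ωt} ‖η‖_M for all η and t. Then, taking η = 𝟙_{(s₀, s₀+h)} v with ‖v‖ = 1, one deduces: for a.e. s₀ > 0 and every t ≥ 0, μ(t + s₀) ≤ K² e^{-2ωt} μ(s₀) holds in the averaged sense ∫_{s₀+t}^{s₀+t+h} μ ≤ K² e^{-2ωt} ∫_{s₀}^{s₀+h} μ for all h > 0. -/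
/-! Test the stability estimate on `η = 𝟙_(s₀, s₀+h] v`: its right translate by `t` is
`𝟙_(s₀+t, s₀+t+h] v`, and since `‖v‖ = 1` both weighted norms are integrals of `μ` over these
intervals. -/

open MeasureTheory Set

lemma ite_le_zero_indicator_sub_Ioc {V : Type*} [Zero V] {a b : ℝ} (ha : 0 ≤ a) (v : V)
    (t s : ℝ) :
    (if s ≤ t then (0 : V) else (Ioc a b).indicator (fun _ => v) (s - t))
      = (Ioc (a + t) (b + t)).indicator (fun _ => v) s := by
  split_ifs with hst
  · exact (indicator_of_notMem (fun hs => by linarith [hs.1]) _).symm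
  · rw [← preimage_sub_const_Ioc, ← indicator_comp_right (fun s => s - t)]
    rfl

lemma mul_norm_sq_indicator_const {V : Type*} [NormedAddCommGroup V] {v : V} (hv : ‖v‖ = 1)
    (f : ℝ → ℝ) (A : Set ℝ) (s : ℝ) :
    f s * ‖A.indicator (fun _ => v) s‖ ^ 2 = A.indicator f s := by
  by_cases hs : s ∈ A <;> simp [hs, hv]

lemma Ioi_inter_Ioc_of_nonneg {a b : ℝ} (ha : 0 ≤ a) : Ioi 0 ∩ Ioc a b = Ioc a b :=
  inter_eq_right.mpr (Ioc_subset_Ioi_self.trans (Ioi_subset_Ioi ha))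

theorem stmt14_general
    {V : Type*} [NormedAddCommGroup V]
    (μ : ℝ → ℝ)
    (v : V) (hv : ‖v‖ = 1)
    (K ω : ℝ)
    (hstab : ∀ (η : ℝ → V), ∀ t ≥ (0:ℝ),
      ∫ s in Ioi 0, μ s * ‖if s ≤ t then (0:V) else η (s - t)‖ ^ 2
        ≤ (K * Real.exp (-ω * t)) ^ 2 * ∫ s in Ioi 0, μ s * ‖η s‖ ^ 2) :
    ∀ s₀ > (0:ℝ), ∀ t ≥ (0:ℝ), ∀ h > (0:ℝ),
      ∫ s in Ioc (s₀ + t) (s₀ + t + h), μ s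
        ≤ K ^ 2 * Real.exp (-2 * ω * t) * ∫ s in Ioc s₀ (s₀ + h), μ s := by
  intro s₀ hs₀ t ht h _
  have key := hstab ((Ioc s₀ (s₀ + h)).indicator fun _ => v) t ht
  simp only [ite_le_zero_indicator_sub_Ioc hs₀.le, mul_norm_sq_indicator_const hv,
    setIntegral_indicator measurableSet_Ioc, Ioi_inter_Ioc_of_nonneg hs₀.le,
    Ioi_inter_Ioc_of_nonneg (add_nonneg hs₀.le ht), add_right_comm s₀ h t] at key
  have hexp : (K * Real.exp (-ω * t)) ^ 2 = K ^ 2 * Real.exp (-2 * ω * t) := by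
    rw [mul_pow, ← Real.exp_nat_mul]
    ring_nf
  rwa [hexp] at key

theorem stmt14
    {V : Type*} [NormedAddCommGroup V]
    (μ : ℝ → ℝ) (hμ0 : ∀ s, 0 ≤ μ s) (hmono : AntitoneOn μ (Ioi 0))
    (hint : IntegrableOn μ (Ioi 0))
    (v : V) (hv : ‖v‖ = 1)
    (K ω : ℝ) (hK : 1 ≤ K) (hω : 0 < ω)
    (hstab : ∀ (η : ℝ → V), ∀ t ≥ (0:ℝ),
      ∫ s in Ioi 0, μ s * ‖if s ≤ t then (0:V) else η (s - t)‖ ^ 2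
        ≤ (K * Real.exp (-ω * t)) ^ 2 * ∫ s in Ioi 0, μ s * ‖η s‖ ^ 2) :
    ∀ s₀ > (0:ℝ), ∀ t ≥ (0:ℝ), ∀ h > (0:ℝ),
      ∫ s in Ioc (s₀ + t) (s₀ + t + h), μ s
        ≤ K ^ 2 * Real.exp (-2 * ω * t) * ∫ s in Ioc s₀ (s₀ + h), μ s :=
  stmt14_general μ v hv K ω hstab
end

section
/- Let μ be nonnegative, nonincreasing and integrable on (0,∞). If for all h > 0, t ≥ 0, s₀ > 0 one has ∫_{s₀+t}^{s₀+t+h} μ(s) ds ≤ K² e^{-2ωt} ∫_{s₀}^{s₀+h} μ(s) ds (K ≥ 1, ω > 0), then there exist C ≥ 1 and δ > 0 such that μ(σ+s) ≤ C e^{-δσ} μ(s) for all σ ≥ 0 and s > 0. -/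
open MeasureTheory Set

/-!
Over an interval of length `h` the integral of a nonincreasing `μ` is squeezed between
`h μ(right end)` and `h μ(left end)`. Applying this to the two integrals in the hypothesis with
`h = 1` and `t = σ - 1` gives `μ(s + σ) ≤ K² e^{-2ω(σ - 1)} μ(s)` for `σ ≥ 1`; for `σ ≤ 1`
monotonicity alone suffices, since the constant `K² e^{2ω}` absorbs `e^{2ωσ} ≤ e^{2ω}`.
-/

section AntitoneOnIoc

variable {f : ℝ → ℝ} {a b : ℝ}

theorem AntitoneOn.integrableOn_Ioc (hf : AntitoneOn f (Icc a b)) : IntegrableOn f (Ioc a b) :=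
  (hf.integrableOn_isCompact isCompact_Icc).mono_set Ioc_subset_Icc_self

theorem AntitoneOn.mul_le_setIntegral_Ioc (hab : a ≤ b) (hf : AntitoneOn f (Icc a b)) :
    (b - a) * f b ≤ ∫ x in Ioc a b, f x := by
  calc (b - a) * f b = ∫ _ in Ioc a b, f b := by simp [hab]
    _ ≤ ∫ x in Ioc a b, f x :=
      setIntegral_mono_on (integrableOn_const measure_Ioc_lt_top.ne) hf.integrableOn_Ioc
        measurableSet_Ioc fun x hx ↦
          hf (Ioc_subset_Icc_self hx) (right_mem_Icc.2 hab) hx.2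

theorem AntitoneOn.setIntegral_Ioc_le_mul (hab : a ≤ b) (hf : AntitoneOn f (Icc a b)) :
    ∫ x in Ioc a b, f x ≤ (b - a) * f a := by
  calc ∫ x in Ioc a b, f x ≤ ∫ _ in Ioc a b, f a :=
      setIntegral_mono_on hf.integrableOn_Ioc (integrableOn_const measure_Ioc_lt_top.ne)
        measurableSet_Ioc fun x hx ↦
          hf (left_mem_Icc.2 hab) (Ioc_subset_Icc_self hx) hx.1.le
    _ = (b - a) * f a := by simp [hab]

end AntitoneOnIoc

theorem AntitoneOn.le_mul_of_setIntegral_Ioc_le_mul {f : ℝ → ℝ} {s t h c : ℝ}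
    (hf : AntitoneOn f (Icc s (s + t + h))) (ht : 0 ≤ t) (hh : 0 < h) (hc : 0 ≤ c)
    (hint : ∫ x in Ioc (s + t) (s + t + h), f x ≤ c * ∫ x in Ioc s (s + h), f x) :
    f (s + t + h) ≤ c * f s := by
  have hlate := (hf.mono (Icc_subset_Icc (by linarith) le_rfl)).mul_le_setIntegral_Ioc
    (le_add_of_nonneg_right hh.le)
  have hearly := (hf.mono (Icc_subset_Icc le_rfl (by linarith))).setIntegral_Ioc_le_mul
    (le_add_of_nonneg_right hh.le)
  simp only [add_sub_cancel_left] at hlate hearly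
  refine le_of_mul_le_mul_left ?_ hh
  calc h * f (s + t + h) ≤ c * ∫ x in Ioc s (s + h), f x := hlate.trans hint
    _ ≤ c * (h * f s) := mul_le_mul_of_nonneg_left hearly hc
    _ = h * (c * f s) := by ring

theorem stmt15_general
    (μ : ℝ → ℝ) (hμ0 : ∀ s, 0 ≤ μ s) (hmono : AntitoneOn μ (Ioi 0))
    (K ω : ℝ) (hK : 1 ≤ K) (hω : 0 < ω)
    (havg : ∀ h > (0:ℝ), ∀ t ≥ (0:ℝ), ∀ s₀ > (0:ℝ),
      ∫ s in Ioc (s₀ + t) (s₀ + t + h), μ s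
        ≤ K ^ 2 * Real.exp (-2 * ω * t) * ∫ s in Ioc s₀ (s₀ + h), μ s) :
    ∃ C ≥ (1:ℝ), ∃ δ > (0:ℝ), ∀ σ ≥ (0:ℝ), ∀ s > (0:ℝ),
      μ (σ + s) ≤ C * Real.exp (-δ * σ) * μ s := by
  have hK2 : 1 ≤ K ^ 2 := one_le_pow₀ hK
  refine ⟨K ^ 2 * Real.exp (2 * ω), ?_, 2 * ω, by positivity, fun σ hσ s hs ↦ ?_⟩
  · exact one_le_mul_of_one_le_of_one_le hK2 (Real.one_le_exp (by positivity))
  have hC : K ^ 2 * Real.exp (2 * ω) * Real.exp (-(2 * ω) * σ)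
      = K ^ 2 * Real.exp (-2 * ω * (σ - 1)) := by
    rw [mul_assoc, ← Real.exp_add]; ring_nf
  have hmono_s : AntitoneOn μ (Icc s (σ + s)) := hmono.mono fun x hx ↦ hs.trans_le hx.1
  rw [hC]
  rcases le_or_gt σ 1 with hσ1 | hσ1
  · have hexp : 1 ≤ K ^ 2 * Real.exp (-2 * ω * (σ - 1)) :=
      one_le_mul_of_one_le_of_one_le hK2 (Real.one_le_exp (by nlinarith))
    calc μ (σ + s) ≤ μ s :=
          hmono_s (left_mem_Icc.2 (by linarith)) (right_mem_Icc.2 (by linarith)) (by linarith)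
      _ ≤ _ := le_mul_of_one_le_left (hμ0 s) hexp
  · have hσs : σ + s = s + (σ - 1) + 1 := by ring
    rw [hσs] at hmono_s ⊢
    exact hmono_s.le_mul_of_setIntegral_Ioc_le_mul (by linarith) one_pos (by positivity)
      (havg 1 one_pos (σ - 1) (by linarith) s hs)

theorem stmt15
    (μ : ℝ → ℝ) (hμ0 : ∀ s, 0 ≤ μ s) (hmono : AntitoneOn μ (Ioi 0))
    (hint : IntegrableOn μ (Ioi 0))
    (K ω : ℝ) (hK : 1 ≤ K) (hω : 0 < ω)
    (havg : ∀ h > (0:ℝ), ∀ t ≥ (0:ℝ), ∀ s₀ > (0:ℝ),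
      ∫ s in Ioc (s₀ + t) (s₀ + t + h), μ s
        ≤ K ^ 2 * Real.exp (-2 * ω * t) * ∫ s in Ioc s₀ (s₀ + h), μ s) :
    ∃ C ≥ (1:ℝ), ∃ δ > (0:ℝ), ∀ σ ≥ (0:ℝ), ∀ s > (0:ℝ),
      μ (σ + s) ≤ C * Real.exp (-δ * σ) * μ s :=
  stmt15_general μ hμ0 hmono K ω hK hω havg
end
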